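/- Let H be a finitely generated group whose commutator subgroup [H,H] is finite. Then the center Z(H) has finite index in H. -/

import Mathlib

theorem commutatorSet_subset_commutator (G : Type*) [Group G] :
    commutatorSet G ⊆ commutator G :=
  commutator_eq_closure G ▸ Subgroup.subset_closure

theorem stmt2 {H : Type*} [Group H] [Group.FG H]
    (hcomm : (commutator H : Set H).Finite) :
    (Subgroup.center H).FiniteIndex :=
  have : Finite (commutatorSet H) := (hcomm.subset (commutatorSet_subset_commutator H)).to_subtype
  Subgroup.finiteIndex_center
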